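/- Let f be standard self-concordant on an open convex set dom f ⊆ ℝⁿ, g : ℝⁿ → ℝ ∪ {+∞} proper, lower semicontinuous and convex, F := f + g. Suppose x* ∈ dom F satisfies the optimality condition 0 ∈ ∇f(x*) + ∂g(x*) and ∇²f(x*) is positive definite. Then for every x ∈ dom F, F(x) − F(x*) ≥ ω(‖x − x*‖_{x*}), where ω(t) := t − ln(1+t). In particular, the minimizer of F is unique. -/

import Mathlib

open Matrix Set Filter Topology

noncomputable section

variable {n : ℕ}

/-- Weighted (semi)norm induced by a matrix `H`: `‖z‖_H = √(zᵀ H z)`. -/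
def mNorm (H : Matrix (Fin n) (Fin n) ℝ) (z : Fin n → ℝ) : ℝ :=
  Real.sqrt (z ⬝ᵥ H.mulVec z)

/-- Dual weighted norm, `‖z‖*_H = √(zᵀ H⁻¹ z)`. -/
def mDualNorm (H : Matrix (Fin n) (Fin n) ℝ) (z : Fin n → ℝ) : ℝ :=
  Real.sqrt (z ⬝ᵥ H⁻¹.mulVec z)

/-- A function `g : ℝⁿ → ℝ ∪ {+∞}` (modelled with values in `EReal`) is proper. -/
def EProper (g : (Fin n → ℝ) → EReal) : Prop :=
  (∀ x, g x ≠ ⊥) ∧ ∃ x, g x ≠ ⊤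

/-- Convexity of an `EReal`-valued function on `ℝⁿ`. -/
def EConvex (g : (Fin n → ℝ) → EReal) : Prop :=
  ∀ x y : Fin n → ℝ, ∀ a b : ℝ, 0 ≤ a → 0 ≤ b → a + b = 1 →
    g (a • x + b • y) ≤ (a : EReal) * g x + (b : EReal) * g y

/-- `v` is a subgradient of `g` at `x`. -/
def ESubgradAt (g : (Fin n → ℝ) → EReal) (v x : Fin n → ℝ) : Prop :=
  g x ≠ ⊤ ∧ ∀ y, g x + ((v ⬝ᵥ (y - x) : ℝ) : EReal) ≤ g y

/-- Objective of the proximal subproblem `g(x) + ½ xᵀHx − uᵀx`. -/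
def proxObj (H : Matrix (Fin n) (Fin n) ℝ) (g : (Fin n → ℝ) → EReal)
    (u x : Fin n → ℝ) : EReal :=
  g x + ((1 / 2 * (x ⬝ᵥ H.mulVec x) - u ⬝ᵥ x : ℝ) : EReal)

/-- `p` solves the proximal subproblem, i.e. `p = P^g_H(u)`. -/
def IsProxPt (H : Matrix (Fin n) (Fin n) ℝ) (g : (Fin n → ℝ) → EReal)
    (u p : Fin n → ℝ) : Prop :=
  ∀ x, proxObj H g u p ≤ proxObj H g u x

/-- The continuous linear map `y ↦ vᵀy`. -/
def dotCLM (v : Fin n → ℝ) : (Fin n → ℝ) →L[ℝ] ℝ :=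
  LinearMap.toContinuousLinearMap
    { toFun := fun y => v ⬝ᵥ y
      map_add' := fun a b => dotProduct_add v a b
      map_smul' := fun c a => by simp }

/-- `f` is standard self-concordant on the open convex set `D`. -/
def StdSelfConcordantOn (D : Set (Fin n → ℝ)) (f : (Fin n → ℝ) → ℝ) : Prop :=
  IsOpen D ∧ Convex ℝ D ∧ ConvexOn ℝ D f ∧ ContDiffOn ℝ 3 f D ∧
    ∀ x ∈ D, ∀ v : Fin n → ℝ, ∀ t : ℝ, x + t • v ∈ D →
      |iteratedDeriv 3 (fun s : ℝ => f (x + s • v)) t| ≤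
        2 * iteratedDeriv 2 (fun s : ℝ => f (x + s • v)) t ^ ((3 : ℝ) / 2)

open scoped Classical in
/-- The extended objective `F = f + g`, equal to `+∞` outside `dom f`. -/
def Fext (D : Set (Fin n → ℝ)) (f : (Fin n → ℝ) → ℝ) (g : (Fin n → ℝ) → EReal)
    (x : Fin n → ℝ) : EReal :=
  if x ∈ D then (f x : EReal) + g x else ⊤

def omega (t : ℝ) : ℝ := t - Real.log (1 + t)

def omegaStar (t : ℝ) : ℝ := -t - Real.log (1 - t)

/-! On the segment `t ↦ x* + t (x - x*)`, `f` restricts to a convex `φ` whose second derivative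
`ψ ≥ 0` satisfies `|ψ'| ≤ 2 ψ^{3/2}`, so `t ↦ ψ(t)^{-1/2} - t` is nonincreasing. This gives
`ψ(t) ≥ r² / (1 + t r)²` with `r = ‖x - x*‖_{x*}`, and integrating twice,
`f(x) - f(x*) - ⟨∇f(x*), x - x*⟩ ≥ r - ln(1 + r) = ω(r)`. Since `-∇f(x*)` is a subgradient of `g`
at `x*`, adding the subgradient inequality bounds `F(x) - F(x*)`; uniqueness follows from
`ω(r) > 0` for `r > 0`. -/

theorem image_le_of_hasDerivAt_le_deriv_boundary {f f' B B' : ℝ → ℝ} {a b : ℝ}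
    (hf : ∀ x ∈ Icc a b, HasDerivAt f (f' x) x) (hB : ∀ x ∈ Icc a b, HasDerivAt B (B' x) x)
    (ha : f a ≤ B a) (bound : ∀ x ∈ Icc a b, f' x ≤ B' x) :
    ∀ x ∈ Icc a b, f x ≤ B x :=
  fun _ hx => image_le_of_deriv_right_le_deriv_boundary
    (fun x hx => (hf x hx).continuousAt.continuousWithinAt)
    (fun x hx => (hf x (Ico_subset_Icc_self hx)).hasDerivWithinAt) ha
    (fun x hx => (hB x hx).continuousAt.continuousWithinAt)
    (fun x hx => (hB x (Ico_subset_Icc_self hx)).hasDerivWithinAt)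
    (fun x hx => bound x (Ico_subset_Icc_self hx)) hx

theorem inv_sqrt_le_inv_sqrt_add {p p' : ℝ → ℝ} (hp : ∀ t ∈ Icc (0 : ℝ) 1, HasDerivAt p (p' t) t)
    (hpos : ∀ t ∈ Icc (0 : ℝ) 1, 0 < p t)
    (hbound : ∀ t ∈ Icc (0 : ℝ) 1, -p' t ≤ 2 * √(p t) ^ 3) :
    ∀ t ∈ Icc (0 : ℝ) 1, (√(p t))⁻¹ ≤ (√(p 0))⁻¹ + t := by
  refine image_le_of_hasDerivAt_le_deriv_boundary
    (fun t ht => ((hp t ht).sqrt (hpos t ht).ne').inv (Real.sqrt_pos.2 (hpos t ht)).ne')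
    (fun t _ => (hasDerivAt_id t).const_add _) (by simp) fun t ht => ?_
  have hs : 0 < √(p t) := Real.sqrt_pos.2 (hpos t ht)
  rw [neg_div, div_div, ← neg_div, div_le_one (by positivity)]
  have := hbound t ht
  nlinarith

theorem sq_div_le_of_abs_deriv_le {ψ ψ' : ℝ → ℝ}
    (hψ : ∀ t ∈ Icc (0 : ℝ) 1, HasDerivAt ψ (ψ' t) t) (hnonneg : ∀ t ∈ Icc (0 : ℝ) 1, 0 ≤ ψ t)
    (hsc : ∀ t ∈ Icc (0 : ℝ) 1, |ψ' t| ≤ 2 * ψ t ^ ((3 : ℝ) / 2)) :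
    ∀ t ∈ Icc (0 : ℝ) 1, ψ 0 / (1 + t * √(ψ 0)) ^ 2 ≤ ψ t := by
  intro t ht
  set r := √(ψ 0)
  have hr : 0 ≤ r := Real.sqrt_nonneg _
  -- Shifting `ψ` by `ε > 0` keeps it away from `0`, where `ψ^{-1/2}` blows up.
  refine le_of_forall_pos_le_add fun ε hε => ?_
  have hpos : ∀ s ∈ Icc (0 : ℝ) 1, 0 < ψ s + ε := fun s hs => by linarith [hnonneg s hs]
  have hbound : ∀ s ∈ Icc (0 : ℝ) 1, -ψ' s ≤ 2 * √(ψ s + ε) ^ 3 := fun s hs => by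
    have hcube : ψ s ^ ((3 : ℝ) / 2) = √(ψ s) ^ 3 := by
      rw [Real.rpow_div_two_eq_sqrt 3 (hnonneg s hs)]
      norm_cast
    have hmono : √(ψ s) ^ 3 ≤ √(ψ s + ε) ^ 3 :=
      pow_le_pow_left₀ (Real.sqrt_nonneg _) (Real.sqrt_le_sqrt (by linarith)) 3
    linarith [hsc s hs, neg_le_abs (ψ' s)]
  have hcomp := inv_sqrt_le_inv_sqrt_add (p := fun s => ψ s + ε)
    (fun s hs => (hψ s hs).add_const ε) hpos hbound t ht
  set q := √(ψ 0 + ε)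
  set a := √(ψ t + ε)
  have hq : r ≤ q := Real.sqrt_le_sqrt (by linarith)
  have hq0 : 0 < q := Real.sqrt_pos.2 (hpos 0 ⟨le_rfl, zero_le_one⟩)
  have ha : 0 < a := Real.sqrt_pos.2 (hpos t ht)
  have hra : r / (1 + t * r) ≤ a := calc
    r / (1 + t * r) ≤ q / (1 + t * q) := by
      rw [div_le_div_iff₀ (by nlinarith [ht.1]) (by nlinarith [ht.1])]
      nlinarith
    _ = (q⁻¹ + t)⁻¹ := by field_simp
    _ ≤ a := (inv_le_comm₀ ha (by have := ht.1; positivity)).1 hcomp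
  calc ψ 0 / (1 + t * r) ^ 2 = (r / (1 + t * r)) ^ 2 := by
        rw [div_pow, Real.sq_sqrt (hnonneg 0 ⟨le_rfl, zero_le_one⟩)]
    _ ≤ a ^ 2 := pow_le_pow_left₀ (div_nonneg hr (by nlinarith [ht.1])) hra 2
    _ = ψ t + ε := Real.sq_sqrt (hpos t ht).le

theorem omega_le_sub_sub_of_hasDerivAt {φ φ' ψ : ℝ → ℝ} {r : ℝ} (hr : 0 ≤ r)
    (hφ : ∀ t ∈ Icc (0 : ℝ) 1, HasDerivAt φ (φ' t) t)
    (hφ' : ∀ t ∈ Icc (0 : ℝ) 1, HasDerivAt φ' (ψ t) t)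
    (hψ : ∀ t ∈ Icc (0 : ℝ) 1, r ^ 2 / (1 + t * r) ^ 2 ≤ ψ t) :
    omega r ≤ φ 1 - φ 0 - φ' 0 := by
  have hden : ∀ t ∈ Icc (0 : ℝ) 1, 0 < 1 + t * r := fun t ht => by nlinarith [ht.1]
  have hlin : ∀ t : ℝ, HasDerivAt (fun s => 1 + s * r) r t := fun t => by
    simpa using ((hasDerivAt_id t).mul_const r).const_add 1
  have hslope : ∀ t ∈ Icc (0 : ℝ) 1, φ' 0 + r - r / (1 + t * r) ≤ φ' t := by
    refine image_le_of_hasDerivAt_le_deriv_boundary (fun t ht => ?_) hφ' (by simp) hψ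
    refine (((hasDerivAt_const t r).fun_div (hlin t) (hden t ht).ne').const_sub
      (φ' 0 + r)).congr_deriv ?_
    ring
  have hval : ∀ t ∈ Icc (0 : ℝ) 1,
      φ 0 + t * φ' 0 + t * r - Real.log (1 + t * r) ≤ φ t := by
    refine image_le_of_hasDerivAt_le_deriv_boundary (fun t ht => ?_) hφ (by simp) hslope
    refine (((((hasDerivAt_id t).mul_const (φ' 0)).const_add (φ 0)).fun_add
      ((hasDerivAt_id t).mul_const r)).fun_sub ((hlin t).log (hden t ht).ne')).congr_deriv ?_
    ring
  have h1 := hval 1 ⟨zero_le_one, le_rfl⟩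
  rw [one_mul, one_mul] at h1
  rw [omega]
  linarith

theorem ConvexOn.deriv_deriv_nonneg {φ : ℝ → ℝ} {s : Set ℝ} {x : ℝ} (hs : IsOpen s)
    (hφ : ConvexOn ℝ s φ) (hd : DifferentiableOn ℝ φ s) (hx : x ∈ s)
    (hdd : DifferentiableAt ℝ (deriv φ) x) : 0 ≤ deriv (deriv φ) x := by
  have hmono : MonotoneOn (deriv φ) s :=
    hφ.monotoneOn_deriv fun t ht => hd.differentiableAt (hs.mem_nhds ht)
  have hacc : AccPt x (𝓟 s) := by
    simpa using (PerfectSpace.univ_preperfect x (mem_univ x)).nhds_inter (hs.mem_nhds hx)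
  exact hdd.hasDerivAt.hasDerivWithinAt.nonneg_of_monotoneOn hacc hmono

theorem omega_sqrt_le_of_selfConcordant {φ : ℝ → ℝ} {s : Set ℝ} (hs : IsOpen s)
    (hIcc : Icc (0 : ℝ) 1 ⊆ s) (hconv : ConvexOn ℝ s φ) (hφ : ContDiffOn ℝ 3 φ s)
    (hsc : ∀ t ∈ Icc (0 : ℝ) 1,
      |iteratedDeriv 3 φ t| ≤ 2 * iteratedDeriv 2 φ t ^ ((3 : ℝ) / 2)) :
    omega √(deriv (deriv φ) 0) ≤ φ 1 - φ 0 - deriv φ 0 := by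
  have hd1 : DifferentiableOn ℝ φ s := hφ.differentiableOn (by norm_num)
  have hφ' : ContDiffOn ℝ 2 (deriv φ) s := hφ.deriv_of_isOpen hs (by norm_num)
  have hd2 : DifferentiableOn ℝ (deriv φ) s := hφ'.differentiableOn (by norm_num)
  have hd3 : DifferentiableOn ℝ (deriv (deriv φ)) s :=
    (hφ'.deriv_of_isOpen hs (m := 1) (by norm_num)).differentiableOn (by norm_num)
  have hat {g : ℝ → ℝ} (hg : DifferentiableOn ℝ g s) (t : ℝ) (ht : t ∈ Icc (0 : ℝ) 1) :
      HasDerivAt g (deriv g t) t :=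
    (hg.differentiableAt (hs.mem_nhds (hIcc ht))).hasDerivAt
  have hnonneg : ∀ t ∈ Icc (0 : ℝ) 1, 0 ≤ deriv (deriv φ) t := fun t ht =>
    hconv.deriv_deriv_nonneg hs hd1 (hIcc ht) (hd2.differentiableAt (hs.mem_nhds (hIcc ht)))
  have hbound := sq_div_le_of_abs_deriv_le (hat hd3) hnonneg (by
    simpa only [iteratedDeriv_eq_iterate, Function.iterate_succ_apply',
      Function.iterate_zero_apply] using hsc)
  refine omega_le_sub_sub_of_hasDerivAt (Real.sqrt_nonneg _) (hat hd1) (hat hd2) fun t ht => ?_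
  rw [Real.sq_sqrt (hnonneg 0 ⟨le_rfl, zero_le_one⟩)]
  exact hbound t ht

theorem StdSelfConcordantOn.omega_mNorm_le {D : Set (Fin n → ℝ)} {f : (Fin n → ℝ) → ℝ}
    {f' : (Fin n → ℝ) → Fin n → ℝ} {f'' : (Fin n → ℝ) → Matrix (Fin n) (Fin n) ℝ}
    (hf : StdSelfConcordantOn D f) (hgrad : ∀ x ∈ D, HasFDerivAt f (dotCLM (f' x)) x)
    (hhess : ∀ x ∈ D, HasFDerivAt f' (LinearMap.toContinuousLinearMap (f'' x).mulVecLin) x)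
    {x y : Fin n → ℝ} (hx : x ∈ D) (hy : y ∈ D) :
    omega (mNorm (f'' x) (y - x)) ≤ f y - f x - f' x ⬝ᵥ (y - x) := by
  obtain ⟨hDo, hDc, hfc, hfC3, hfsc⟩ := hf
  set u := y - x
  set L : ℝ →ᵃ[ℝ] (Fin n → ℝ) := AffineMap.lineMap x y
  have hL : ∀ t : ℝ, L t = x + t • u := fun t => by
    simp [L, u, AffineMap.lineMap_apply_module', add_comm]
  have hLD : IsOpen (L ⁻¹' D) := hDo.preimage L.continuous_of_finiteDimensional
  have hL0 : L 0 ∈ D := by simpa [hL] using hx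
  have hgradL : ∀ t ∈ L ⁻¹' D, HasDerivAt (f ∘ L) (f' (L t) ⬝ᵥ u) t := fun t ht =>
    (hgrad _ ht).comp_hasDerivAt t AffineMap.hasDerivAt_lineMap
  have hhessL : HasDerivAt (fun t => f' (L t) ⬝ᵥ u) (u ⬝ᵥ (f'' x).mulVec u) 0 := by
    have h := (dotCLM u).hasFDerivAt.comp_hasDerivAt 0
      ((hhess _ hL0).comp_hasDerivAt 0 AffineMap.hasDerivAt_lineMap)
    rw [show ⇑(dotCLM u) ∘ f' ∘ ⇑L = fun t => f' (L t) ⬝ᵥ u from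
      funext fun t => dotProduct_comm u (f' (L t))] at h
    refine h.congr_deriv ?_
    change u ⬝ᵥ f'' (L 0) *ᵥ u = _
    rw [hL 0, zero_smul, add_zero]
  have hderiv : deriv (f ∘ L) =ᶠ[𝓝 0] fun t => f' (L t) ⬝ᵥ u :=
    Filter.eventuallyEq_of_mem (hLD.mem_nhds hL0) fun t ht => (hgradL t ht).deriv
  have hline : (fun s : ℝ => f (x + s • u)) = f ∘ L := funext fun s => by simp [hL]
  have key := omega_sqrt_le_of_selfConcordant hLD (fun t ht => hDc.lineMap_mem hx hy ht)
    (hfc.comp_affineMap L) (hfC3.comp (AffineMap.contDiff_lineMap x y).contDiffOn fun _ ht => ht)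
    fun t ht => by
      simpa only [hline] using hfsc x hx u t (by rw [← hL]; exact hDc.lineMap_mem hx hy ht)
  rwa [hderiv.deriv_eq, hhessL.deriv, hderiv.eq_of_nhds, Function.comp_apply,
    Function.comp_apply, AffineMap.lineMap_apply_zero, AffineMap.lineMap_apply_one] at key

theorem omega_pos {t : ℝ} (ht : 0 < t) : 0 < omega t := by
  have := Real.log_lt_sub_one_of_pos (by linarith : 0 < 1 + t) (by linarith)
  rw [omega]
  linarith

theorem Matrix.PosDef.mNorm_pos {H : Matrix (Fin n) (Fin n) ℝ} (hH : H.PosDef) {z : Fin n → ℝ}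
    (hz : z ≠ 0) : 0 < mNorm H z :=
  Real.sqrt_pos.2 (by simpa using hH.dotProduct_mulVec_pos hz)

theorem ESubgradAt.toReal_add_le {g : (Fin n → ℝ) → EReal} {v x y : Fin n → ℝ}
    (hv : ESubgradAt g v x) (hx : g x ≠ ⊥) (hy : g y ≠ ⊥) (hy' : g y ≠ ⊤) :
    (g x).toReal + v ⬝ᵥ (y - x) ≤ (g y).toReal := by
  have h := hv.2 y
  rwa [← EReal.coe_toReal hv.1 hx, ← EReal.coe_toReal hy' hy, ← EReal.coe_add,
    EReal.coe_le_coe_iff] at h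

theorem Fext_eq_coe {D : Set (Fin n → ℝ)} {f : (Fin n → ℝ) → ℝ} {g : (Fin n → ℝ) → EReal}
    {x : Fin n → ℝ} (hx : x ∈ D) (hgx : g x ≠ ⊥) (hgx' : g x ≠ ⊤) :
    Fext D f g x = ((f x + (g x).toReal : ℝ) : EReal) := by
  rw [Fext, if_pos hx, EReal.coe_add, EReal.coe_toReal hgx' hgx]

theorem mem_and_ne_top_of_Fext_ne_top {D : Set (Fin n → ℝ)} {f : (Fin n → ℝ) → ℝ}
    {g : (Fin n → ℝ) → EReal} {x : Fin n → ℝ} (h : Fext D f g x ≠ ⊤) : x ∈ D ∧ g x ≠ ⊤ := by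
  by_cases hx : x ∈ D
  · refine ⟨hx, fun hgx => h ?_⟩
    rw [Fext, if_pos hx, hgx, EReal.coe_add_top]
  · exact absurd (if_neg hx) h

theorem objective_gap_lower_bound_general
    (n : ℕ) (D : Set (Fin n → ℝ)) (f : (Fin n → ℝ) → ℝ)
    (f' : (Fin n → ℝ) → Fin n → ℝ)
    (f'' : (Fin n → ℝ) → Matrix (Fin n) (Fin n) ℝ)
    (hf : StdSelfConcordantOn D f)
    (hgrad : ∀ x ∈ D, HasFDerivAt f (dotCLM (f' x)) x)
    (hhess : ∀ x ∈ D,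
      HasFDerivAt f' (LinearMap.toContinuousLinearMap (f'' x).mulVecLin) x)
    (g : (Fin n → ℝ) → EReal) (hg_proper : EProper g)
    (xs : Fin n → ℝ) (hxsD : xs ∈ D)
    (hopt : ESubgradAt g (-(f' xs)) xs) (hpd : (f'' xs).PosDef) :
    (∀ x : Fin n → ℝ, x ∈ D → g x ≠ ⊤ →
        ((omega (mNorm (f'' xs) (x - xs)) : ℝ) : EReal) ≤
          Fext D f g x - Fext D f g xs) ∧
      ∀ y : Fin n → ℝ, (∀ z, Fext D f g y ≤ Fext D f g z) → y = xs := by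
  have hbot := hg_proper.1
  have hgap : ∀ x ∈ D, g x ≠ ⊤ →
      omega (mNorm (f'' xs) (x - xs)) ≤ f x + (g x).toReal - (f xs + (g xs).toReal) := by
    intro x hx hgx
    have hf_gap := hf.omega_mNorm_le hgrad hhess hxsD hx
    have hg_gap := hopt.toReal_add_le (hbot xs) (hbot x) hgx
    rw [neg_dotProduct] at hg_gap
    linarith
  have hFxs := Fext_eq_coe (f := f) hxsD (hbot xs) hopt.1
  refine ⟨fun x hx hgx => ?_, fun y hy => ?_⟩
  · rw [Fext_eq_coe hx (hbot x) hgx, hFxs, ← EReal.coe_sub]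
    exact EReal.coe_le_coe_iff.2 (hgap x hx hgx)
  · obtain ⟨hyD, hgy⟩ := mem_and_ne_top_of_Fext_ne_top
      (ne_top_of_le_ne_top (hFxs ▸ EReal.coe_ne_top _) (hy xs))
    have hle := hy xs
    rw [Fext_eq_coe hyD (hbot y) hgy, hFxs, EReal.coe_le_coe_iff] at hle
    by_contra hne
    have := omega_pos (hpd.mNorm_pos (sub_ne_zero.2 hne))
    linarith [hgap y hyD hgy]

/-- If `0 ∈ ∇f(x*) + ∂g(x*)` and `∇²f(x*) ≻ 0`, then for every `x ∈ dom F`,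
`F(x) − F(x*) ≥ ω(‖x − x*‖_{x*})`; in particular the minimizer of `F` is unique. -/
theorem objective_gap_lower_bound
    (n : ℕ) (D : Set (Fin n → ℝ)) (f : (Fin n → ℝ) → ℝ)
    (f' : (Fin n → ℝ) → Fin n → ℝ)
    (f'' : (Fin n → ℝ) → Matrix (Fin n) (Fin n) ℝ)
    (hf : StdSelfConcordantOn D f)
    (hgrad : ∀ x ∈ D, HasFDerivAt f (dotCLM (f' x)) x)
    (hhess : ∀ x ∈ D,
      HasFDerivAt f' (LinearMap.toContinuousLinearMap (f'' x).mulVecLin) x)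
    (g : (Fin n → ℝ) → EReal) (hg_proper : EProper g)
    (hg_lsc : LowerSemicontinuous g) (hg_conv : EConvex g)
    (xs : Fin n → ℝ) (hxsD : xs ∈ D)
    (hopt : ESubgradAt g (-(f' xs)) xs) (hpd : (f'' xs).PosDef) :
    (∀ x : Fin n → ℝ, x ∈ D → g x ≠ ⊤ →
        ((omega (mNorm (f'' xs) (x - xs)) : ℝ) : EReal) ≤
          Fext D f g x - Fext D f g xs) ∧
      ∀ y : Fin n → ℝ, (∀ z, Fext D f g y ≤ Fext D f g z) → y = xs :=
  objective_gap_lower_bound_general n D f f' f'' hf hgrad hhess g hg_proper xs hxsD hopt hpd
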